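/- Let a > 1 be a fixed real number. For all sufficiently small q > 0 the function φ_{a,q} has exactly two zeros in (0,1); denote by z_φ(q) the larger of the two. Then (1 − z_φ(q))·√(log a / q) tends to 1 as q tends to 0 from above, i.e. 1 − z_φ(q) ∼ √(q/log a) as q → 0⁺. -/

import Mathlib

open Real Set

lemma phi_hasDerivAt (a q z : ℝ) (hz0 : 0 < z) (hz1 : z < 1) :
    HasDerivAt (fun z => Real.log z + Real.log a - q * (z / (1 - z)) ^ 2)
      (z⁻¹ - q * (2 * z / (1 - z) ^ 3)) z := by
  have h1z : (1 : ℝ) - z ≠ 0 := by intro h; linarith [sub_eq_zero.mp h]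
  have hd : HasDerivAt (fun z : ℝ => z / (1 - z))
      ((1 * (1 - z) - z * (0 - 1)) / (1 - z) ^ 2) z :=
    (hasDerivAt_id z).div ((hasDerivAt_const z 1).sub (hasDerivAt_id z)) h1z
  have hp := hd.pow 2
  have hl := Real.hasDerivAt_log hz0.ne'
  have h := (hl.add_const (Real.log a)).sub (hp.const_mul q)
  refine h.congr_deriv ?_
  field_simp
  linear_combination (-2 * z ^ 2 * q) * inv_mul_cancel₀ h1z

lemma phi_mono (a q c : ℝ) (hq : 0 < q) (hc : c < 1) (hcc : 3 * q ≤ (1 - c) ^ 3) :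
    StrictMonoOn (fun z => Real.log z + Real.log a - q * (z / (1 - z)) ^ 2) (Set.Ioo 0 c) := by
  apply strictMonoOn_of_deriv_pos (convex_Ioo 0 c)
  · intro z hz
    exact (phi_hasDerivAt a q z hz.1 (hz.2.trans hc)).continuousAt.continuousWithinAt
  · intro z hz
    rw [interior_Ioo] at hz
    obtain ⟨hz0, hzc⟩ := hz
    have hz1 : z < 1 := hzc.trans hc
    rw [(phi_hasDerivAt a q z hz0 hz1).deriv]
    have h1z : (0:ℝ) < 1 - z := by linarith
    have hcube : (1 - c) ^ 3 < (1 - z) ^ 3 := by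
      apply pow_lt_pow_left₀ (by linarith) (by linarith)
      norm_num
    have hinv : 1 < z⁻¹ := (one_lt_inv₀ hz0).mpr hz1
    have hfrac : q * (2 * z / (1 - z) ^ 3) < 1 := by
      rw [mul_div_assoc'] at *
      rw [div_lt_one (by positivity)]
      nlinarith
    linarith

lemma phi_anti (a q c : ℝ) (hq : 0 < q) (hc : 1 / 2 ≤ c) (hcc : (1 - c) ^ 3 ≤ q / 2) :
    StrictAntiOn (fun z => Real.log z + Real.log a - q * (z / (1 - z)) ^ 2) (Set.Ioo c 1) := by
  apply strictAntiOn_of_deriv_neg (convex_Ioo c 1)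
  · intro z hz
    exact (phi_hasDerivAt a q z (by linarith [hz.1]) hz.2).continuousAt.continuousWithinAt
  · intro z hz
    rw [interior_Ioo] at hz
    obtain ⟨hzc, hz1⟩ := hz
    have hz0 : (0:ℝ) < z := by linarith
    rw [(phi_hasDerivAt a q z hz0 hz1).deriv]
    have h1z : (0:ℝ) < 1 - z := by linarith
    have hcube : (1 - z) ^ 3 < (1 - c) ^ 3 := by
      apply pow_lt_pow_left₀ (by linarith) (by linarith)
      norm_num
    have hinv : z⁻¹ < 2 := by
      rw [inv_lt_comm₀ (by linarith) (by norm_num)]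
      linarith
    have hfrac : 2 < q * (2 * z / (1 - z) ^ 3) := by
      rw [mul_div_assoc', lt_div_iff₀ (by positivity)]
      nlinarith
    linarith

set_option maxHeartbeats 1000000 in
lemma zeros_structure (a : ℝ) (ha : 1 < a) :
    ∃ q₀ > (0 : ℝ), ∀ q : ℝ, 0 < q → q < q₀ →
      ∃ s1 s2 : ℝ, s1 ∈ Set.Ioo (0:ℝ) 1 ∧ s2 ∈ Set.Ioo (1 - (q/2) ^ ((1:ℝ)/3)) 1 ∧ s1 < s2 ∧
        {z ∈ Set.Ioo (0:ℝ) 1 | Real.log z + Real.log a - q * (z / (1 - z)) ^ 2 = 0}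
          = {s1, s2} := by
  have hL : 0 < Real.log a := Real.log_pos ha
  set L := Real.log a with hLdef
  clear_value L
  set m : ℝ := max (1/2) (Real.exp (-(L/2))) with hmdef
  have hm1 : m < 1 := by
    apply max_lt (by norm_num)
    rw [Real.exp_lt_one_iff]
    linarith
  have hmhalf : (1:ℝ)/2 ≤ m := le_max_left _ _
  have hm0 : (0:ℝ) < m := by linarith
  have hlogm : -(L/2) ≤ Real.log m := by
    calc -(L/2) = Real.log (Real.exp (-(L/2))) := (Real.log_exp _).symm
    _ ≤ Real.log m := Real.log_le_log (Real.exp_pos _) (le_max_right _ _)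
  clear_value m
  set δ : ℝ := 1 - m with hδdef
  have hδ0 : 0 < δ := by linarith
  have hδhalf : δ ≤ 1/2 := by linarith
  clear_value δ
  refine ⟨min (δ^3/3) ((L/4)^3), lt_min (by positivity) (by positivity), ?_⟩
  intro q hq0 hqq
  have hq1 : 3 * q < δ ^ 3 := by
    have := lt_of_lt_of_le hqq (min_le_left _ _); linarith
  have hq2 : q / 2 < (L/4) ^ 3 := by
    have := lt_of_lt_of_le hqq (min_le_right _ _); linarith
  set r1 : ℝ := (3*q) ^ ((1:ℝ)/3) with hr1def
  set r2 : ℝ := (q/2) ^ ((1:ℝ)/3) with hr2def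
  have hr1p : 0 < r1 := Real.rpow_pos_of_pos (by linarith) _
  have hr2p : 0 < r2 := Real.rpow_pos_of_pos (by linarith) _
  have cube : ∀ x : ℝ, 0 ≤ x → (x ^ ((1:ℝ)/3)) ^ 3 = x := by
    intro x hx
    rw [← Real.rpow_natCast (x ^ ((1:ℝ)/3)) 3, ← Real.rpow_mul hx]
    norm_num
  have hr13 : r1 ^ 3 = 3 * q := cube _ (by linarith)
  have hr23 : r2 ^ 3 = q / 2 := cube _ (by linarith)
  have hr21 : r2 < r1 :=
    Real.rpow_lt_rpow (by linarith) (by linarith) (by norm_num)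
  have hr1δ : r1 < δ := by
    have h := Real.rpow_lt_rpow (by linarith : (0:ℝ) ≤ 3*q) hq1 (by norm_num : (0:ℝ) < 1/3)
    rwa [show ((δ:ℝ)^3 : ℝ) ^ ((1:ℝ)/3) = δ by
      rw [← Real.rpow_natCast δ 3, ← Real.rpow_mul hδ0.le]; norm_num] at h
  have hr2L : r2 < L / 4 := by
    have h := Real.rpow_lt_rpow (by linarith : (0:ℝ) ≤ q/2) hq2 (by norm_num : (0:ℝ) < 1/3)
    rwa [show ((L/4)^3 : ℝ) ^ ((1:ℝ)/3) = L/4 by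
      rw [← Real.rpow_natCast (L/4) 3, ← Real.rpow_mul (by positivity)]; norm_num] at h
  clear_value r1
  set c1 : ℝ := 1 - r1 with hc1def
  set c2 : ℝ := 1 - r2 with hc2def
  have hmc1 : m < c1 := by linarith
  have hc12 : c1 < c2 := by linarith
  have hc2lt1 : c2 < 1 := by linarith
  have hc1half : (1:ℝ)/2 < c1 := lt_of_le_of_lt hmhalf hmc1
  have h1c1 : 1 - c1 = r1 := by linarith
  have h1c2 : 1 - c2 = r2 := by linarith
  clear_value c1 c2
  -- gap positivity
  have hgap : ∀ z, c1 ≤ z → z ≤ c2 → 0 < Real.log z + L - q * (z / (1 - z)) ^ 2 := by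
    intro z hz1 hz2
    have hzm : m < z := lt_of_lt_of_le hmc1 hz1
    have hz0 : 0 < z := lt_trans hm0 hzm
    have hzlt1 : z < 1 := lt_of_le_of_lt hz2 hc2lt1
    have h1z : r2 ≤ 1 - z := by linarith
    have hlogz : -(L/2) ≤ Real.log z :=
      le_trans hlogm (Real.log_le_log hm0 hzm.le)
    have hfr : z / (1 - z) ≤ 1 / r2 :=
      div_le_div₀ (by norm_num) hzlt1.le hr2p h1z
    have hfrn : 0 ≤ z / (1 - z) := div_nonneg hz0.le (by linarith)
    have hsq : (z / (1-z))^2 ≤ (1/r2)^2 := pow_le_pow_left₀ hfrn hfr 2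
    have hqr : q * (1/r2)^2 = 2 * r2 := by
      have hq2r : q = 2 * r2^3 := by linarith
      rw [hq2r]
      field_simp
    have hb : q * (z / (1-z))^2 ≤ 2*r2 :=
      le_trans (mul_le_mul_of_nonneg_left hsq hq0.le) (le_of_eq hqr)
    linarith
  -- continuity on (0,1)
  have hcont : ∀ x y : ℝ, 0 < x → y < 1 → ContinuousOn
      (fun z => Real.log z + L - q * (z / (1 - z)) ^ 2) (Set.Icc x y) := by
    intro x y hx hy z hz
    have h1 := (phi_hasDerivAt a q z (lt_of_lt_of_le hx hz.1)
      (lt_of_le_of_lt hz.2 hy)).continuousAt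
    rw [hLdef]
    exact h1.continuousWithinAt
  -- small zero
  set z₀ : ℝ := 1 / (2*a) with hz₀def
  have ha0 : (0:ℝ) < a := by linarith
  have hz₀0 : 0 < z₀ := by positivity
  have hz₀half : z₀ < 1/2 := by
    rw [hz₀def, div_lt_div_iff₀ (by linarith) (by norm_num)]; linarith
  have hφz₀ : Real.log z₀ + L - q * (z₀ / (1 - z₀)) ^ 2 < 0 := by
    have h1 : Real.log z₀ = -(Real.log 2 + L) := by
      rw [hz₀def, one_div, Real.log_inv, Real.log_mul (by norm_num) (by linarith), hLdef]
    have h2 : (0:ℝ) ≤ q * (z₀ / (1 - z₀)) ^ 2 := by positivity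
    have h3 : (0:ℝ) < Real.log 2 := Real.log_pos (by norm_num)
    linarith
  clear_value z₀
  have hz₀c1 : z₀ < c1 := by linarith
  have hφc1 : 0 < Real.log c1 + L - q * (c1 / (1 - c1)) ^ 2 := hgap c1 le_rfl hc12.le
  obtain ⟨s1, hs1mem, hs1⟩ := intermediate_value_Ioo hz₀c1.le (hcont z₀ c1 hz₀0 (by linarith))
    (⟨hφz₀, hφc1⟩ : (0:ℝ) ∈ Set.Ioo _ _)
  -- large zero
  set t₂ : ℝ := Real.sqrt (q / (4*L)) with ht₂def
  have ht₂p : 0 < t₂ := Real.sqrt_pos.mpr (by positivity)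
  have ht₂sq : t₂ ^ 2 = q / (4*L) := Real.sq_sqrt (by positivity)
  clear_value t₂
  have ht₂r2 : t₂ < r2 := by
    apply lt_of_pow_lt_pow_left₀ 2 hr2p.le
    rw [ht₂sq]
    have hq2r : q = 2 * r2^3 := by linarith
    rw [hq2r, div_lt_iff₀ (by positivity)]
    have h1 : 2*r2^2 * r2 < 2*r2^2 * (L/4) :=
      mul_lt_mul_of_pos_left hr2L (by positivity)
    have h2 : (0:ℝ) ≤ L * r2^2 := by positivity
    linarith [h1, h2]
  set z₂ : ℝ := 1 - t₂ with hz₂def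
  have hz₂c2 : c2 < z₂ := by linarith
  have hz₂1 : z₂ < 1 := by linarith
  have hz₂half : 1/2 < z₂ := by linarith
  have h1z₂ : 1 - z₂ = t₂ := by linarith
  clear_value z₂
  have hφz₂ : Real.log z₂ + L - q * (z₂ / (1 - z₂)) ^ 2 < 0 := by
    have hlog : Real.log z₂ < 0 := Real.log_neg (by linarith) hz₂1
    have hq4 : q = 4 * L * t₂ ^ 2 := by rw [ht₂sq]; field_simp
    have hqt : q * (z₂ / (1 - z₂)) ^ 2 = 4 * L * z₂ ^ 2 := by
      rw [h1z₂, div_pow, hq4]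
      field_simp
    rw [hqt]
    have hq4' : (1:ℝ)/4 < z₂^2 := by
      have hmm : (1/2:ℝ)*(1/2) < z₂*z₂ :=
        mul_lt_mul'' hz₂half hz₂half (by norm_num) (by norm_num)
      rw [sq]; linarith [hmm]
    have h5 : L * (1/4) < L * z₂^2 := mul_lt_mul_of_pos_left hq4' hL
    linarith
  have hφc2 : 0 < Real.log c2 + L - q * (c2 / (1 - c2)) ^ 2 := hgap c2 hc12.le le_rfl
  obtain ⟨s2, hs2mem, hs2⟩ := intermediate_value_Ioo' hz₂c2.le
    (hcont c2 z₂ (by linarith) hz₂1) (⟨hφz₂, hφc2⟩ : (0:ℝ) ∈ Set.Ioo _ _)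
  -- conclude
  refine ⟨s1, s2, ⟨by linarith [hs1mem.1], by linarith [hs1mem.2]⟩,
    ⟨by linarith [hs2mem.1], by linarith [hs2mem.2]⟩,
    by linarith [hs1mem.2, hs2mem.1], ?_⟩
  ext z
  simp only [Set.mem_setOf_eq, Set.mem_insert_iff, Set.mem_singleton_iff]
  constructor
  · rintro ⟨⟨hz0, hz1⟩, hzeq⟩
    rcases lt_or_ge z c1 with hlt | hge
    · left
      have hmono := phi_mono a q c1 hq0 (by linarith) (by rw [h1c1, hr13])
      have hfz : (fun z => Real.log z + Real.log a - q * (z / (1 - z)) ^ 2) z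
          = (fun z => Real.log z + Real.log a - q * (z / (1 - z)) ^ 2) s1 := by
        simp only
        rw [← hLdef, hzeq]
        exact hs1.symm
      exact hmono.injOn ⟨hz0, hlt⟩ ⟨by linarith [hs1mem.1], hs1mem.2⟩ hfz
    · rcases le_or_gt z c2 with hle | hgt
      · exfalso
        have := hgap z hge hle
        rw [hLdef] at this
        linarith
      · right
        have hanti := phi_anti a q c2 hq0 (by linarith) (by rw [h1c2, hr23])
        have hfz : (fun z => Real.log z + Real.log a - q * (z / (1 - z)) ^ 2) z
            = (fun z => Real.log z + Real.log a - q * (z / (1 - z)) ^ 2) s2 := by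
          simp only
          rw [← hLdef, hzeq]
          exact hs2.symm
        exact hanti.injOn ⟨hgt, hz1⟩ ⟨hs2mem.1, by linarith [hs2mem.2]⟩ hfz
  · rintro (rfl | rfl)
    · exact ⟨⟨by linarith [hs1mem.1], by linarith [hs1mem.2]⟩, hs1⟩
    · exact ⟨⟨by linarith [hs2mem.1], by linarith [hs2mem.2]⟩, hs2⟩

/-- For fixed `a > 1`, for all sufficiently small `q > 0` the catabolic phase function
`φ_{a,q}(z) = log z + log a − q·(z/(1−z))²` has exactly two zeros in `(0,1)`, and the larger
zero `z_φ(q)` satisfies `1 − z_φ(q) ∼ √(q/log a)` as `q → 0⁺`. -/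
theorem stmt_10 (a : ℝ) (ha : 1 < a) :
    ∃ q₀ > (0 : ℝ),
      (∀ q : ℝ, 0 < q → q < q₀ →
        {z ∈ Set.Ioo (0 : ℝ) 1 |
          Real.log z + Real.log a - q * (z / (1 - z)) ^ 2 = 0}.encard = 2) ∧
      ∀ zφ : ℝ → ℝ,
        (∀ q : ℝ, 0 < q → q < q₀ →
          zφ q ∈ Set.Ioo (0 : ℝ) 1 ∧
          Real.log (zφ q) + Real.log a - q * (zφ q / (1 - zφ q)) ^ 2 = 0 ∧
          ∀ z ∈ Set.Ioo (0 : ℝ) 1,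
            Real.log z + Real.log a - q * (z / (1 - z)) ^ 2 = 0 → z ≤ zφ q) →
        Filter.Tendsto (fun q : ℝ => (1 - zφ q) * Real.sqrt (Real.log a / q))
          (nhdsWithin 0 (Set.Ioi 0)) (nhds 1) := by
  obtain ⟨q₀, hq₀, hstr⟩ := zeros_structure a ha
  have hL : 0 < Real.log a := Real.log_pos ha
  refine ⟨q₀, hq₀, ?_, ?_⟩
  · intro q hq0 hqq
    obtain ⟨s1, s2, _, _, hlt, hset⟩ := hstr q hq0 hqq
    rw [hset]
    exact Set.encard_pair hlt.ne
  · intro zφ hzφ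
    -- lower bound: zφ q > 1 - (q/2)^(1/3)
    have hlow : ∀ q : ℝ, 0 < q → q < q₀ → 1 - (q/2) ^ ((1:ℝ)/3) < zφ q := by
      intro q hq0 hqq
      obtain ⟨s1, s2, _, hs2mem, _, hset⟩ := hstr q hq0 hqq
      have hs2S : s2 ∈ {z ∈ Set.Ioo (0:ℝ) 1 |
          Real.log z + Real.log a - q * (z / (1 - z)) ^ 2 = 0} := by
        rw [hset]; right; rfl
      obtain ⟨hs2I, hs2eq⟩ := hs2S
      calc 1 - (q/2) ^ ((1:ℝ)/3) < s2 := hs2mem.1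
        _ ≤ zφ q := (hzφ q hq0 hqq).2.2 s2 hs2I hs2eq
    have hIoo : Set.Ioo (0:ℝ) q₀ ∈ nhdsWithin (0:ℝ) (Set.Ioi 0) :=
      Ioo_mem_nhdsGT_of_mem ⟨le_refl 0, hq₀⟩
    -- zφ → 1
    have hzto1 : Filter.Tendsto zφ (nhdsWithin 0 (Set.Ioi 0)) (nhds 1) := by
      have hlow' : Filter.Tendsto (fun q : ℝ => 1 - (q/2) ^ ((1:ℝ)/3))
          (nhdsWithin 0 (Set.Ioi 0)) (nhds 1) := by
        have hc : ContinuousAt (fun q : ℝ => 1 - (q/2) ^ ((1:ℝ)/3)) 0 := by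
          apply ContinuousAt.sub continuousAt_const
          have h2 : ContinuousAt (fun x : ℝ => x ^ ((1:ℝ)/3)) ((0:ℝ)/2) := by
            rw [zero_div]
            exact Real.continuousAt_rpow_const 0 _ (Or.inr (by norm_num))
          have h3 : ContinuousAt (fun q : ℝ => q/2) 0 :=
            continuousAt_id.div continuousAt_const (by norm_num)
          exact ContinuousAt.comp (g := fun x : ℝ => x ^ ((1:ℝ)/3))
            (f := fun q : ℝ => q/2) h2 h3
        have h4 : Filter.Tendsto (fun q : ℝ => 1 - (q/2) ^ ((1:ℝ)/3))
            (nhdsWithin 0 (Set.Ioi 0)) (nhds (1 - ((0:ℝ)/2) ^ ((1:ℝ)/3))) :=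
          hc.tendsto.mono_left nhdsWithin_le_nhds
        simpa [Real.zero_rpow (by norm_num : (1:ℝ)/3 ≠ 0)] using h4
      apply tendsto_of_tendsto_of_tendsto_of_le_of_le' hlow' tendsto_const_nhds
      · filter_upwards [hIoo] with q hq
        exact (hlow q hq.1 hq.2).le
      · filter_upwards [hIoo] with q hq
        exact ((hzφ q hq.1 hq.2).1.2).le
    -- eventual identity
    have hev : ∀ᶠ q in nhdsWithin (0:ℝ) (Set.Ioi 0),
        zφ q * Real.sqrt (Real.log a / (Real.log a + Real.log (zφ q)))
          = (1 - zφ q) * Real.sqrt (Real.log a / q) := by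
      filter_upwards [hIoo] with q hq
      obtain ⟨⟨hz0, hz1⟩, heq, -⟩ := hzφ q hq.1 hq.2
      set z := zφ q
      have ht : 0 < 1 - z := by linarith
      have hP : q * (z / (1 - z)) ^ 2 = Real.log a + Real.log z := by linarith
      have hPpos : 0 < Real.log a + Real.log z := by
        rw [← hP]
        exact mul_pos hq.1 (pow_pos (div_pos hz0 ht) 2)
      have hPt : (Real.log a + Real.log z) * (1 - z) ^ 2 = q * z ^ 2 := by
        rw [← hP]; field_simp
      have key : (1 - z) ^ 2 * (Real.log a / q) = z ^ 2 * (Real.log a / (Real.log a + Real.log z)) := by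
        rw [mul_div_assoc', mul_div_assoc', div_eq_div_iff hq.1.ne' hPpos.ne']
        linear_combination Real.log a * hPt
      rw [show (1 - z) * Real.sqrt (Real.log a / q)
            = Real.sqrt ((1 - z) ^ 2 * (Real.log a / q)) by
          rw [Real.sqrt_mul (sq_nonneg _), Real.sqrt_sq ht.le],
        show z * Real.sqrt (Real.log a / (Real.log a + Real.log z))
            = Real.sqrt (z ^ 2 * (Real.log a / (Real.log a + Real.log z))) by
          rw [Real.sqrt_mul (sq_nonneg _), Real.sqrt_sq hz0.le],
        key]
    -- limit of the model function
    have hmodel : Filter.Tendsto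
        (fun q => zφ q * Real.sqrt (Real.log a / (Real.log a + Real.log (zφ q))))
        (nhdsWithin (0:ℝ) (Set.Ioi 0)) (nhds 1) := by
      have hc : ContinuousAt
          (fun z : ℝ => z * Real.sqrt (Real.log a / (Real.log a + Real.log z))) 1 := by
        apply ContinuousAt.mul continuousAt_id
        apply ContinuousAt.sqrt
        apply ContinuousAt.div continuousAt_const
        · exact continuousAt_const.add (Real.continuousAt_log one_ne_zero)
        · simp [hL.ne']
      have h2 := hc.tendsto.comp hzto1
      simpa [Function.comp_def, Real.log_one, div_self hL.ne', Real.sqrt_one] using h2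
    exact hmodel.congr' hev
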